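/- Let n ≥ 2 and for 0 < ε < 1 define I(ε) = −(1 − (1+ε)/2^n) log₂((1 − (1+ε)/2^n)/(2^n − 1)) + (2^(n−1) − 1)((1+ε)/2^n) log₂((1+ε)/2^n) + ((1−ε)/2) log₂((1−ε)/2^n). Then lim_{ε → 0⁺} I(ε)/ε² = (2^n − 2)/(2 (2^n − 1) ln 2). -/

import Mathlib

/-- The mutual information `I(S;J)` gained about Simon's parameter by a single query of
Simon's algorithm with a pseudo-pure input state of purity `ε`. -/
noncomputable def simonInfo (n : ℕ) (ε : ℝ) : ℝ :=
  -(1 - (1 + ε) / 2 ^ n) *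
      Real.logb 2 ((1 - (1 + ε) / 2 ^ n) / ((2 : ℝ) ^ n - 1)) +
    ((2 : ℝ) ^ (n - 1) - 1) * ((1 + ε) / 2 ^ n) * Real.logb 2 ((1 + ε) / 2 ^ n) +
    ((1 - ε) / 2) * Real.logb 2 ((1 - ε) / 2 ^ n)

/-! With `N = 2 ^ n` and `φ = klFun`, `φ x = x log x + 1 - x`, one has
`I(ε) ln 2 = (N - 2)/(2N) φ(1 + ε) + φ(1 - ε)/2 - (N - 1)/N φ(1 - ε/(N - 1))`:
the linear terms of the logarithms cancel. Since `φ(1) = φ'(1) = 0` and `φ''(1) = 1`,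
L'Hôpital gives `φ(1 + cε)/ε² → c²/2`, and the three limits add up to `(N - 2)/(2(N - 1))`. -/

open Filter Real Topology InformationTheory

lemma tendsto_log_div_two_mul_sub_one :
    Tendsto (fun x => log x / (2 * (x - 1))) (𝓝[≠] 1) (𝓝 (1 / 2)) := by
  have h := (hasDerivAt_log one_ne_zero).tendsto_slope.div_const 2
  rw [inv_one] at h
  refine h.congr fun x => ?_
  simp only [slope_def_field, log_one, sub_zero, div_eq_mul_inv, mul_inv]
  ring

lemma tendsto_klFun_div_sq_sub_one :
    Tendsto (fun x => klFun x / (x - 1) ^ 2) (𝓝[≠] 1) (𝓝 (1 / 2)) := by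
  refine HasDerivAt.lhopital_zero_nhdsNE (f' := log) (g' := fun x => 2 * (x - 1)) ?_ ?_ ?_ ?_ ?_
    tendsto_log_div_two_mul_sub_one
  · filter_upwards [nhdsWithin_le_nhds (eventually_ne_nhds one_ne_zero)] with x hx
    exact hasDerivAt_klFun hx
  · refine Eventually.of_forall fun x => ?_
    simpa using ((hasDerivAt_id' x).sub_const 1).fun_pow 2
  · filter_upwards [self_mem_nhdsWithin] with x hx
    exact mul_ne_zero two_ne_zero (sub_ne_zero.mpr hx)
  · exact tendsto_nhdsWithin_of_tendsto_nhds (continuous_klFun.tendsto' 1 0 klFun_one)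
  · exact tendsto_nhdsWithin_of_tendsto_nhds
      ((by fun_prop : Continuous fun x : ℝ => (x - 1) ^ 2).tendsto' 1 0 (by norm_num))

lemma tendsto_klFun_one_add_mul_div_sq (c : ℝ) :
    Tendsto (fun ε => klFun (1 + c * ε) / ε ^ 2) (𝓝[≠] 0) (𝓝 (c ^ 2 / 2)) := by
  rcases eq_or_ne c 0 with rfl | hc
  · simp [klFun_one]
  have hmap : Tendsto (fun ε => 1 + c * ε) (𝓝[≠] 0) (𝓝[≠] 1) := by
    refine tendsto_nhdsWithin_of_tendsto_nhds_of_eventually_within _ ?_ ?_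
    · exact tendsto_nhdsWithin_of_tendsto_nhds
        ((by fun_prop : Continuous fun ε : ℝ => 1 + c * ε).tendsto' 0 1 (by simp))
    · filter_upwards [self_mem_nhdsWithin] with ε hε
      simpa [hc] using hε
  have h := (tendsto_klFun_div_sq_sub_one.comp hmap).const_mul (c ^ 2)
  rw [mul_one_div] at h
  refine h.congr' ?_
  filter_upwards [self_mem_nhdsWithin] with ε hε
  simp only [Function.comp_apply, add_sub_cancel_left]
  field_simp

lemma simonInfo_eq_klFun {n : ℕ} (hn : 1 ≤ n) {ε : ℝ} (hε : |ε| < 1) :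
    simonInfo n ε = ((2 ^ n - 2) / (2 * 2 ^ n) * klFun (1 + ε) + 1 / 2 * klFun (1 - ε)
      - (2 ^ n - 1) / 2 ^ n * klFun (1 - ε / (2 ^ n - 1))) / log 2 := by
  set N : ℝ := 2 ^ n with hN
  have hN2 : 2 ≤ N := by simpa using pow_le_pow_right₀ (by norm_num : (1 : ℝ) ≤ 2) hn
  have hhalf : (2 : ℝ) ^ (n - 1) = N / 2 := by
    rw [hN, ← pow_sub_one_mul (by omega : n ≠ 0)]; ring
  obtain ⟨hlo, hhi⟩ := abs_lt.mp hε
  have hN1 : N - 1 ≠ 0 := by linarith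
  have hfirst : (1 - (1 + ε) / N) / (N - 1) = (1 - ε / (N - 1)) / N := by
    field_simp; ring
  have hfirst_ne : 1 - ε / (N - 1) ≠ 0 := by
    have : ε / (N - 1) < 1 := (div_lt_one (by linarith)).mpr (by linarith)
    linarith
  have hplus : 1 + ε ≠ 0 := by linarith
  have hminus : 1 - ε ≠ 0 := by linarith
  rw [simonInfo, ← hN, hhalf, hfirst]
  simp only [logb, klFun_apply, log_div hfirst_ne (by positivity : N ≠ 0),
    log_div hplus (by positivity : N ≠ 0), log_div hminus (by positivity : N ≠ 0)]
  field_simp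
  ring

lemma tendsto_simonInfo_div_sq {n : ℕ} (hn : 1 ≤ n) :
    Tendsto (fun ε => simonInfo n ε / ε ^ 2) (𝓝[≠] 0)
      (𝓝 ((2 ^ n - 2) / (2 * (2 ^ n - 1) * log 2))) := by
  have hN2 : (2 : ℝ) ≤ 2 ^ n := by simpa using pow_le_pow_right₀ (by norm_num : (1 : ℝ) ≤ 2) hn
  have hplus := tendsto_klFun_one_add_mul_div_sq 1
  have hminus := tendsto_klFun_one_add_mul_div_sq (-1)
  have hshift := tendsto_klFun_one_add_mul_div_sq (-(2 ^ n - 1)⁻¹)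
  simp only [one_mul, neg_mul, inv_mul_eq_div, ← sub_eq_add_neg] at hplus hminus hshift
  have hlim := ((((hplus.const_mul ((2 ^ n - 2) / (2 * 2 ^ n))).add
    (hminus.const_mul (1 / 2))).sub (hshift.const_mul ((2 ^ n - 1) / 2 ^ n))).div_const (log 2))
  have hval : ((2 ^ n - 2) / (2 * 2 ^ n) * (1 ^ 2 / 2) + 1 / 2 * ((-1) ^ 2 / 2)
      - (2 ^ n - 1) / 2 ^ n * ((-(2 ^ n - 1)⁻¹) ^ 2 / 2)) / log 2
      = ((2 : ℝ) ^ n - 2) / (2 * (2 ^ n - 1) * log 2) := by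
    have : (2 : ℝ) ^ n - 1 ≠ 0 := by linarith
    field_simp
    ring
  rw [hval] at hlim
  refine hlim.congr' ?_
  filter_upwards [nhdsWithin_le_nhds (Ioo_mem_nhds (by norm_num : (-1 : ℝ) < 0) one_pos)]
    with ε hε
  rw [simonInfo_eq_klFun hn (abs_lt.mpr hε)]
  ring

/-- As `ε → 0⁺`, `I(ε)/ε² → (2^n - 2)/(2 (2^n - 1) ln 2)`: the information gained by one
Simon query with a pseudo-pure state is `(2^n - 2) ε² / (2 (2^n - 1) ln 2) + O(ε³)`. -/
theorem simon_pps_information_asymptotics (n : ℕ) (hn : 2 ≤ n) :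
    Filter.Tendsto (fun ε => simonInfo n ε / ε ^ 2) (nhdsWithin 0 (Set.Ioi 0))
      (nhds (((2 : ℝ) ^ n - 2) / (2 * ((2 : ℝ) ^ n - 1) * Real.log 2))) :=
  (tendsto_simonInfo_div_sq (by omega)).mono_left (nhdsWithin_mono 0 fun _ hε => ne_of_gt hε)
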